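/- arXiv:2411.06301 — 2 statements merged into one kernel-verified Lean document; each statement's English description precedes it below -/
import Mathlib

section
/- Consider a positive regular d-type branching process with extinction probability one from every type, and let q ∈ (0,∞)^d with f(q) = q. Then either q_k = 1 for every k, or q_k > 1 for every k. -/
open MeasureTheory ProbabilityTheory ENNReal Filter Set

/-- Extended exponential `[0,∞] → [1,∞]`. -/
noncomputable def eexp (x : ℝ≥0∞) : ℝ≥0∞ :=
  if x = ⊤ then ⊤ else ENNReal.ofReal (Real.exp x.toReal)

/-- Extended logarithm, suitable for values in `[1,∞]`. -/
noncomputable def elog (y : ℝ≥0∞) : ℝ≥0∞ :=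
  if y = ⊤ then ⊤ else ENNReal.ofReal (Real.log y.toReal)

/-- The generating function of the `n`-th generation of a `d`-type branching process:
`F P X n q k = 𝔼ₖ[∏ⱼ qⱼ ^ Xⱼ(n)]`, where `P k` is the law of the process started from a
single individual of type `k`. Values are in `[0,∞]`, with the conventions `∞ ^ 0 = 1`
and `∞ ^ x = ∞` for `x > 0` built into `ℝ≥0∞`. -/
noncomputable def genFun {d : ℕ} {Ω : Type*} [MeasurableSpace Ω]
    (P : Fin d → Measure Ω) (X : ℕ → Ω → Fin d → ℕ) (n : ℕ)
    (q : Fin d → ℝ≥0∞) : Fin d → ℝ≥0∞ :=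
  fun k => ∫⁻ ω, ∏ j, (q j) ^ (X n ω j) ∂ (P k)

/-- The log-Laplace transform of the `n`-th generation:
`logGenFun P X n λ k = log 𝔼ₖ[exp (∑ⱼ λⱼ Xⱼ(n))]`, i.e. `g⁽ⁿ⁾(λ) = log f⁽ⁿ⁾(e^λ)`
componentwise, viewed as a map `[0,∞]^d → [0,∞]^d`. -/
noncomputable def logGenFun {d : ℕ} {Ω : Type*} [MeasurableSpace Ω]
    (P : Fin d → Measure Ω) (X : ℕ → Ω → Fin d → ℕ) (n : ℕ)
    (l : Fin d → ℝ≥0∞) : Fin d → ℝ≥0∞ :=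
  fun k => elog (genFun P X n (fun j => eexp (l j)) k)

/-- The event that the branching process eventually becomes extinct. -/
def ExtinctionEvent {d : ℕ} {Ω : Type*} (X : ℕ → Ω → Fin d → ℕ) : Set Ω :=
  {ω | ∃ N, ∀ n ≥ N, X n ω = 0}

/-- Positive regularity: for some `N`, started from any type `k`, there is a positive
chance of having an individual of type `j` in generation `N`, for every `j`. -/
def PositiveRegular {d : ℕ} {Ω : Type*} [MeasurableSpace Ω]
    (P : Fin d → Measure Ω) (X : ℕ → Ω → Fin d → ℕ) : Prop :=
  ∃ N, ∀ k j, 0 < P k {ω | 1 ≤ X N ω j}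

/-- Non-singularity: some type has a positive chance of at least two total offspring. -/
def NonSingular {d : ℕ} {Ω : Type*} [MeasurableSpace Ω]
    (P : Fin d → Measure Ω) (X : ℕ → Ω → Fin d → ℕ) : Prop :=
  ∃ k, 0 < P k {ω | 2 ≤ ∑ j, X 1 ω j}

/-- The mean matrix `M k j = 𝔼ₖ[Xⱼ(1)]`. -/
noncomputable def meanMatrix {d : ℕ} {Ω : Type*} [MeasurableSpace Ω]
    (P : Fin d → Measure Ω) (X : ℕ → Ω → Fin d → ℕ) : Matrix (Fin d) (Fin d) ℝ :=
  fun k j => (∫⁻ ω, (X 1 ω j : ℝ≥0∞) ∂ (P k)).toReal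

/-- Subcriticality: the mean matrix has finite entries and all of its (complex)
eigenvalues have modulus `< 1`; for a nonnegative matrix this says exactly that the
largest (Perron–Frobenius) eigenvalue is `< 1`. -/
def Subcritical {d : ℕ} {Ω : Type*} [MeasurableSpace Ω]
    (P : Fin d → Measure Ω) (X : ℕ → Ω → Fin d → ℕ) : Prop :=
  (∀ k j, ∫⁻ ω, (X 1 ω j : ℝ≥0∞) ∂ (P k) ≠ ⊤) ∧
    ∀ μ ∈ spectrum ℂ ((meanMatrix P X).map (Complex.ofReal)), ‖μ‖ < 1

/-- Continuity of each component of the generating function on `(0,∞]^d`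
(Hypothesis III of the main theorem). -/
def GenFunContinuous {d : ℕ} {Ω : Type*} [MeasurableSpace Ω]
    (P : Fin d → Measure Ω) (X : ℕ → Ω → Fin d → ℕ) : Prop :=
  ∀ k, ContinuousOn (fun q => genFun P X 1 q k) {q : Fin d → ℝ≥0∞ | ∀ j, 0 < q j}

/-! Since the product `∏ⱼ qⱼ ^ Xⱼ(n)` equals `1` on `{X(n) = 0}`, a fixed point satisfies
`Pₖ(X(n) = 0) ≤ f⁽ⁿ⁾(q)ₖ = qₖ`; letting `n → ∞`, extinction with probability one gives
`qₖ ≥ 1`. Once `q ≥ 1`, the product is at least `qⱼ` wherever `Xⱼ(N) ≥ 1`, so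
`qₖ = f⁽ᴺ⁾(q)ₖ ≥ 1 + (qⱼ - 1) Pₖ(Xⱼ(N) ≥ 1)`, and positive regularity makes this exceed `1`
as soon as `qⱼ > 1`. -/

section BranchingProcess

variable {d : ℕ} {Ω : Type*} [MeasurableSpace Ω]

theorem measure_extinctionEvent_le_iSup (μ : Measure Ω) (X : ℕ → Ω → Fin d → ℕ) :
    μ (ExtinctionEvent X) ≤ ⨆ n, μ {ω | X n ω = 0} := by
  have hunion : ExtinctionEvent X = ⋃ N, {ω | ∀ n ≥ N, X n ω = 0} := by
    ext ω
    simp [ExtinctionEvent]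
  have hmono : Monotone fun N => {ω | ∀ n ≥ N, X n ω = 0} :=
    fun _ _ hNM _ hω n hn => hω n (hNM.trans hn)
  rw [hunion, hmono.measure_iUnion]
  exact iSup_mono fun N => measure_mono fun ω hω => hω N le_rfl

variable (P : Fin d → Measure Ω) (X : ℕ → Ω → Fin d → ℕ)

theorem genFun_eq_of_isFixedPt {q : Fin d → ℝ≥0∞}
    (hiter : ∀ n q, (genFun P X 1)^[n] q = genFun P X n q) (hfix : genFun P X 1 q = q)
    (n : ℕ) : genFun P X n q = q := by
  rw [← hiter]
  exact Function.iterate_fixed hfix n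

theorem measure_eq_zero_le_genFun {n : ℕ} (hX : Measurable (X n)) (q : Fin d → ℝ≥0∞)
    (k : Fin d) : P k {ω | X n ω = 0} ≤ genFun P X n q k := by
  rw [← lintegral_indicator_one (s := {ω | X n ω = 0}) (hX (measurableSet_singleton 0))]
  refine lintegral_mono (Set.indicator_le fun ω hω => ?_)
  simp [show X n ω = 0 from hω]

theorem one_le_of_genFun_eq (hmeas : ∀ n, Measurable (X n))
    (hext : ∀ k, P k (ExtinctionEvent X) = 1) {q : Fin d → ℝ≥0∞}
    (hfix : ∀ n, genFun P X n q = q) (k : Fin d) : 1 ≤ q k :=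
  calc 1 = P k (ExtinctionEvent X) := (hext k).symm
    _ ≤ ⨆ n, P k {ω | X n ω = 0} := measure_extinctionEvent_le_iSup (P k) X
    _ ≤ q k := iSup_le fun n =>
      (measure_eq_zero_le_genFun P X (hmeas n) q k).trans_eq (congrFun (hfix n) k)

theorem one_add_mul_measure_le_genFun {n : ℕ} (hX : Measurable (X n)) {q : Fin d → ℝ≥0∞}
    (hq : ∀ i, 1 ≤ q i) (j k : Fin d) [IsProbabilityMeasure (P k)] :
    1 + (q j - 1) * P k {ω | 1 ≤ X n ω j} ≤ genFun P X n q k := by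
  set A := {ω | 1 ≤ X n ω j}
  have hA : MeasurableSet A := ((measurable_pi_apply j).comp hX) measurableSet_Ici
  have hpow : ∀ ω i, 1 ≤ q i ^ X n ω i := fun ω i => one_le_pow_of_one_le' (hq i) _
  have hpointwise : ∀ ω, 1 + A.indicator (fun _ => q j - 1) ω ≤ ∏ i, q i ^ X n ω i := by
    intro ω
    by_cases hω : ω ∈ A
    · rw [Set.indicator_of_mem hω, add_tsub_cancel_of_le (hq j)]
      calc q j ≤ q j ^ X n ω j := le_self_pow₀ (hq j) (Nat.one_le_iff_ne_zero.mp hω)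
        _ ≤ ∏ i, q i ^ X n ω i :=
          Finset.single_le_prod' (fun i _ => hpow ω i) (Finset.mem_univ j)
    · rw [Set.indicator_of_notMem hω, add_zero]
      exact Finset.one_le_prod' fun i _ => hpow ω i
  calc 1 + (q j - 1) * P k A = ∫⁻ ω, 1 + A.indicator (fun _ => q j - 1) ω ∂P k := by
        rw [lintegral_add_left measurable_const,
          lintegral_indicator_const hA, lintegral_one, measure_univ]
    _ ≤ genFun P X n q k := lintegral_mono hpointwise

theorem one_lt_of_genFun_eq [∀ k, IsProbabilityMeasure (P k)]
    (hmeas : ∀ n, Measurable (X n)) (hPR : PositiveRegular P X) {q : Fin d → ℝ≥0∞}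
    (hfix : ∀ n, genFun P X n q = q) (hq : ∀ i, 1 ≤ q i) {j : Fin d} (hj : 1 < q j)
    (k : Fin d) : 1 < q k := by
  obtain ⟨N, hN⟩ := hPR
  calc 1 < 1 + (q j - 1) * P k {ω | 1 ≤ X N ω j} :=
        ENNReal.lt_add_right one_ne_top (mul_ne_zero (tsub_pos_of_lt hj).ne' (hN k j).ne')
    _ ≤ genFun P X N q k := one_add_mul_measure_le_genFun P X (hmeas N) hq j k
    _ = q k := congrFun (hfix N) k

end BranchingProcess

theorem fixed_point_dichotomy_general
    {d : ℕ} {Ω : Type*} [MeasurableSpace Ω]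
    (P : Fin d → Measure Ω) (X : ℕ → Ω → Fin d → ℕ)
    (hprob : ∀ k, IsProbabilityMeasure (P k))
    (hmeas : ∀ n, Measurable (X n))
    (hiter : ∀ n q, (genFun P X 1)^[n] q = genFun P X n q)
    (hext : ∀ k, P k (ExtinctionEvent X) = 1)
    (hPR : PositiveRegular P X)
    (q : Fin d → ℝ≥0∞)
    (hfix : genFun P X 1 q = q) :
    (∀ k, q k = 1) ∨ (∀ k, 1 < q k) := by
  have hfixN := genFun_eq_of_isFixedPt P X hiter hfix
  have hq1 := one_le_of_genFun_eq P X hmeas hext hfixN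
  by_cases h : ∀ k, q k = 1
  · exact Or.inl h
  · obtain ⟨j, hj⟩ := not_forall.mp h
    exact Or.inr (one_lt_of_genFun_eq P X hmeas hPR hfixN hq1 ((hq1 j).lt_of_ne' hj))

/-- For a positive regular `d`-type branching process with extinction
probability one from every type, any fixed point `q ∈ (0,∞)^d` of the generating
function satisfies: either `q k = 1` for every `k`, or `q k > 1` for every `k`. -/
theorem fixed_point_dichotomy
    {d : ℕ} {Ω : Type*} [MeasurableSpace Ω]
    (P : Fin d → Measure Ω) (X : ℕ → Ω → Fin d → ℕ)
    (hprob : ∀ k, IsProbabilityMeasure (P k))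
    (hmeas : ∀ n, Measurable (X n))
    (hiter : ∀ n q, (genFun P X 1)^[n] q = genFun P X n q)
    (hext : ∀ k, P k (ExtinctionEvent X) = 1)
    (hPR : PositiveRegular P X)
    (q : Fin d → ℝ≥0∞) (hq : ∀ k, 0 < q k ∧ q k ≠ ⊤)
    (hfix : genFun P X 1 q = q) :
    (∀ k, q k = 1) ∨ (∀ k, 1 < q k) :=
  fixed_point_dichotomy_general P X hprob hmeas hiter hext hPR q hfix
end

section
/- In the setting of a subcritical, positive regular, non-singular d-type branching process with continuous generating function and a.s. extinction: (i) if λ ∈ [0,∞)^d \ {0} with limsup_n |g^{(n)}(λ)| < ∞ and η ∈ [0,∞)^d with η < λ componentwise (at least one strict), then lim_n |g^{(n)}(η)| = 0; (ii) if limsup_n |g^{(n)}(λ)| > 0 and η > λ, then limsup_n |g^{(n)}(η)| = ∞. -/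
open MeasureTheory ProbabilityTheory ENNReal Filter Set

/-!
Write `F⁽ⁿ⁾` for the generating function of generation `n`, so that `g⁽ⁿ⁾(λ) = log F⁽ⁿ⁾(e^λ)`.
If `g⁽ⁿ⁾(λ)` stays bounded then `F⁽ⁿ⁾(e^λ) ≤ B` eventually, and positive regularity at some
generation `N` makes `v = F⁽ᴺ⁾(e^λ)` finite and `u = F⁽ᴺ⁾(e^η)` strictly smaller than `v` in every
coordinate, so that `u ≤ v ^ θ` for some `θ < 1`. On the event `{Xₙ = 0}` the integrand of
`F⁽ⁿ⁺ᴺ⁾(e^η) = 𝔼[∏ⱼ uⱼ ^ Xⱼ(n)]` is `1`; on its complement Hölder's inequality with exponents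
`1/θ` and `1/(1-θ)` bounds the integral by `B ^ θ · P(Xₙ ≠ 0) ^ (1-θ)`, which tends to `0` by
almost sure extinction. Hence `F⁽ⁿ⁾(e^η) → 1`, i.e. `g⁽ⁿ⁾(η) → 0`. Part (ii) is part (i) with the
roles of `λ` and `η` exchanged.
-/

lemma one_le_eexp (x : ℝ≥0∞) : 1 ≤ eexp x := by
  unfold eexp
  split_ifs
  · exact le_top
  · simp

lemma eexp_ne_top {x : ℝ≥0∞} (hx : x ≠ ⊤) : eexp x ≠ ⊤ := by
  simp [eexp, hx]

lemma strictMono_eexp : StrictMono eexp := by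
  intro x y hxy
  have hx : x ≠ ⊤ := hxy.ne_top
  rcases eq_or_ne y ⊤ with rfl | hy
  · simpa [eexp] using (eexp_ne_top hx).lt_top
  · simp only [eexp, if_neg hx, if_neg hy]
    exact (ENNReal.ofReal_lt_ofReal_iff (Real.exp_pos _)).2
      (Real.exp_lt_exp.2 (ENNReal.toReal_strict_mono hy hxy))

lemma elog_eexp (x : ℝ≥0∞) : elog (eexp x) = x := by
  rcases eq_or_ne x ⊤ with rfl | hx
  · simp [eexp, elog]
  · simp [eexp, elog, hx, (Real.exp_pos _).le]

lemma eexp_elog {z : ℝ≥0∞} (hz : 1 ≤ z) : eexp (elog z) = z := by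
  rcases eq_or_ne z ⊤ with rfl | hz'
  · simp [eexp, elog]
  · have hz1 : 1 ≤ z.toReal := by simpa using ENNReal.toReal_mono hz' hz
    simp [eexp, elog, hz', Real.log_nonneg hz1, Real.exp_log (by linarith : 0 < z.toReal)]

lemma tendsto_elog_one : Tendsto elog (nhds 1) (nhds 0) := by
  have hcont : ContinuousAt (fun z : ℝ≥0∞ => ENNReal.ofReal (Real.log z.toReal)) 1 :=
    ENNReal.continuous_ofReal.continuousAt.comp
      ((Real.continuousAt_log (by simp)).comp (ENNReal.continuousAt_toReal one_ne_top))
  have hlim := hcont.tendsto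
  simp only [toReal_one, Real.log_one, ofReal_zero] at hlim
  refine hlim.congr' ?_
  filter_upwards [gt_mem_nhds one_lt_top] with z hz
  simp [elog, hz.ne]

lemma exists_rpow_gt {ι : Type*} [Finite ι] {a b : ι → ℝ≥0∞} (hab : ∀ i, a i < b i)
    (hb : ∀ i, b i ≠ ⊤) : ∃ θ : ℝ, 0 < θ ∧ θ < 1 ∧ ∀ i, a i < b i ^ θ := by
  have hlt : ∀ i, ∀ᶠ θ : ℝ in nhds 1, a i < b i ^ θ := by
    intro i
    have hb0 : 0 < (b i).toReal := ENNReal.toReal_pos (hab i).ne_bot (hb i)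
    have hcont : Tendsto (fun θ : ℝ => b i ^ θ) (nhds 1) (nhds (b i)) := by
      have h := (ENNReal.continuous_ofReal.tendsto _).comp
        (Real.continuousAt_const_rpow (b := 1) hb0.ne').tendsto
      simp only [Real.rpow_one, ofReal_toReal (hb i)] at h
      refine h.congr fun θ => ?_
      simp only [Function.comp_apply, ← ENNReal.ofReal_rpow_of_pos hb0, ofReal_toReal (hb i)]
    exact hcont.eventually_const_lt (hab i)
  have hθ : ∀ᶠ θ : ℝ in nhdsWithin 1 (Iio 1), 0 < θ ∧ θ < 1 ∧ ∀ i, a i < b i ^ θ :=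
    (Filter.eventually_all.2 hlt |>.and (lt_mem_nhds one_pos)).filter_mono nhdsWithin_le_nhds
      |>.and self_mem_nhdsWithin |>.mono fun θ ⟨⟨h, h0⟩, h1⟩ => ⟨h0, h1, h⟩
  exact hθ.exists

lemma setLIntegral_rpow_le {Ω : Type*} [MeasurableSpace Ω] (μ : Measure Ω) {f : Ω → ℝ≥0∞}
    (hf : AEMeasurable f μ) (s : Set Ω) {θ : ℝ} (hθ0 : 0 < θ) (hθ1 : θ < 1) :
    ∫⁻ ω in s, f ω ^ θ ∂μ ≤ (∫⁻ ω, f ω ∂μ) ^ θ * μ s ^ (1 - θ) := by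
  have hpq := Real.holderConjugate_one_div hθ0 (sub_pos.2 hθ1) (by ring)
  have holder := ENNReal.lintegral_mul_le_Lp_mul_Lq (μ.restrict s) hpq
    (hf.restrict.pow_const θ) (aemeasurable_const (b := (1 : ℝ≥0∞)))
  have hθ : ∀ x : ℝ≥0∞, (x ^ θ) ^ (1 / θ) = x := fun x => by
    rw [← ENNReal.rpow_mul, mul_one_div_cancel hθ0.ne', ENNReal.rpow_one]
  simp only [Pi.mul_apply, mul_one, hθ, one_div_one_div, ENNReal.one_rpow, lintegral_const,
    Measure.restrict_apply_univ, one_mul] at holder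
  exact holder.trans (mul_le_mul_left (ENNReal.rpow_le_rpow
    (setLIntegral_le_lintegral s f) hθ0.le) _)

section ProdPow

variable {Ω ι : Type*} [MeasurableSpace Ω] [Fintype ι] {μ : Measure Ω} {Y : Ω → ι → ℕ}

lemma measurable_prod_pow (hY : Measurable Y) (q : ι → ℝ≥0∞) :
    Measurable fun ω => ∏ i, q i ^ Y ω i :=
  Finset.measurable_prod _ fun i _ =>
    (measurable_from_top (f := fun m : ℕ => q i ^ m)).comp ((measurable_pi_apply i).comp hY)

lemma one_le_lintegral_prod_pow [IsProbabilityMeasure μ] {q : ι → ℝ≥0∞} (hq : ∀ i, 1 ≤ q i) :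
    1 ≤ ∫⁻ ω, ∏ i, q i ^ Y ω i ∂μ :=
  calc 1 = ∫⁻ _, 1 ∂μ := by simp
    _ ≤ _ := lintegral_mono fun ω => Finset.one_le_prod' fun i _ => one_le_pow_of_one_le' (hq i) _

lemma prod_pow_add_le {q r : ι → ℝ≥0∞} (hr : ∀ i, 1 ≤ r i) (hqr : q ≤ r) {j : ι}
    (hrj : r j ≠ ⊤) {y : ι → ℕ} (hy : 1 ≤ y j) :
    ∏ i, q i ^ y i + (1 - q j / r j) ≤ ∏ i, r i ^ y i := by
  classical
  set c := q j / r j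
  have hcr : c * r j = q j := ENNReal.div_mul_cancel (one_pos.trans_le (hr j)).ne' hrj
  have hc1 : c ≤ 1 := ENNReal.div_le_of_le_mul (by simpa using hqr j)
  have hle : ∏ i, q i ^ y i ≤ c * ∏ i, r i ^ y i := by
    have hj : q j ^ y j ≤ c * r j ^ y j := by
      obtain ⟨s, hs⟩ := Nat.exists_eq_add_of_le' hy
      calc q j ^ y j = q j * q j ^ s := by rw [hs, pow_succ']
        _ ≤ c * r j * r j ^ s := by rw [hcr]; gcongr; exact hqr j
        _ = c * r j ^ y j := by rw [hs, pow_succ', mul_assoc]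
    rw [← Finset.mul_prod_erase _ _ (Finset.mem_univ j),
      ← Finset.mul_prod_erase _ (fun i => r i ^ y i) (Finset.mem_univ j), ← mul_assoc]
    exact mul_le_mul' hj (Finset.prod_le_prod' fun i _ => pow_le_pow_left' (hqr i) _)
  have hone : 1 ≤ ∏ i, r i ^ y i := Finset.one_le_prod' fun i _ => one_le_pow_of_one_le' (hr i) _
  calc ∏ i, q i ^ y i + (1 - c) ≤ c * ∏ i, r i ^ y i + (1 - c) * ∏ i, r i ^ y i :=
        add_le_add hle (le_mul_of_one_le_right' hone)
    _ = ∏ i, r i ^ y i := by rw [← add_mul, add_tsub_cancel_of_le hc1, one_mul]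

lemma lintegral_prod_pow_lt (hY : Measurable Y) {q r : ι → ℝ≥0∞} (hr : ∀ i, 1 ≤ r i)
    (hqr : q ≤ r) {j : ι} (hqrj : q j < r j) (hrj : r j ≠ ⊤) (hpos : 0 < μ {ω | 1 ≤ Y ω j})
    (hfin : ∫⁻ ω, ∏ i, r i ^ Y ω i ∂μ ≠ ⊤) :
    ∫⁻ ω, ∏ i, q i ^ Y ω i ∂μ < ∫⁻ ω, ∏ i, r i ^ Y ω i ∂μ := by
  set S := {ω | 1 ≤ Y ω j}
  have hS : MeasurableSet S := measurableSet_le measurable_const (measurable_pi_iff.1 hY j)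
  have hgap : ∫⁻ ω, ∏ i, q i ^ Y ω i ∂μ + (1 - q j / r j) * μ S
      ≤ ∫⁻ ω, ∏ i, r i ^ Y ω i ∂μ := by
    rw [← lintegral_indicator_const hS, ← lintegral_add_left (measurable_prod_pow hY q)]
    refine lintegral_mono fun ω => ?_
    by_cases hω : ω ∈ S
    · simpa [Set.indicator_of_mem hω] using prod_pow_add_le hr hqr hrj hω
    · simpa [Set.indicator_of_notMem hω] using
        Finset.prod_le_prod' fun i _ => pow_le_pow_left' (hqr i) _
  have hc : 0 < 1 - q j / r j :=
    tsub_pos_of_lt ((ENNReal.div_lt_iff (Or.inl (one_pos.trans_le (hr j)).ne') (Or.inl hrj)).2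
      (by simpa using hqrj))
  exact (ENNReal.lt_add_right (ne_top_of_le_ne_top hfin (le_self_add.trans hgap))
    (ENNReal.mul_pos hc.ne' hpos.ne').ne').trans_le hgap

lemma lintegral_prod_pow_eq_top (hY : Measurable Y) {u : ι → ℝ≥0∞} (hu : ∀ i, 1 ≤ u i) {j : ι}
    (huj : u j = ⊤) (hpos : 0 < μ {ω | 1 ≤ Y ω j}) :
    ∫⁻ ω, ∏ i, u i ^ Y ω i ∂μ = ⊤ := by
  set S := {ω | 1 ≤ Y ω j}
  have hS : MeasurableSet S := measurableSet_le measurable_const (measurable_pi_iff.1 hY j)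
  have hle : ⊤ * μ S ≤ ∫⁻ ω, ∏ i, u i ^ Y ω i ∂μ := by
    rw [← lintegral_indicator_const hS]
    refine lintegral_mono fun ω => ?_
    by_cases hω : ω ∈ S
    · rw [Set.indicator_of_mem hω, ← ENNReal.top_pow (Nat.one_le_iff_ne_zero.1 hω), ← huj]
      exact Finset.single_le_prod' (fun i _ => one_le_pow_of_one_le' (hu i) _) (Finset.mem_univ j)
    · simp [Set.indicator_of_notMem hω]
  rwa [ENNReal.top_mul hpos.ne', top_le_iff] at hle

lemma prod_pow_le_rpow {u v : ι → ℝ≥0∞} {θ : ℝ} (hθ : 0 ≤ θ) (huv : ∀ i, u i ≤ v i ^ θ)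
    (y : ι → ℕ) : ∏ i, u i ^ y i ≤ (∏ i, v i ^ y i) ^ θ := by
  rw [← ENNReal.prod_rpow_of_nonneg hθ]
  refine Finset.prod_le_prod' fun i _ => (pow_le_pow_left' (huv i) _).trans_eq ?_
  rw [← ENNReal.rpow_natCast, ← ENNReal.rpow_natCast, ← ENNReal.rpow_mul, ← ENNReal.rpow_mul,
    mul_comm]

lemma lintegral_prod_pow_le_one_add [IsProbabilityMeasure μ] (hY : Measurable Y)
    {u v : ι → ℝ≥0∞} {θ : ℝ} (hθ0 : 0 < θ) (hθ1 : θ < 1) (huv : ∀ i, u i ≤ v i ^ θ) :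
    ∫⁻ ω, ∏ i, u i ^ Y ω i ∂μ
      ≤ 1 + (∫⁻ ω, ∏ i, v i ^ Y ω i ∂μ) ^ θ * μ {ω | Y ω ≠ 0} ^ (1 - θ) := by
  have hZ : MeasurableSet {ω | Y ω = 0} := hY (measurableSet_singleton 0)
  rw [← lintegral_add_compl _ hZ]
  gcongr
  · calc ∫⁻ ω in {ω | Y ω = 0}, ∏ i, u i ^ Y ω i ∂μ = ∫⁻ _ in {ω | Y ω = 0}, 1 ∂μ :=
          setLIntegral_congr_fun hZ fun ω (hω : Y ω = 0) => by simp [hω]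
      _ ≤ 1 := by rw [setLIntegral_one]; exact prob_le_one
  · calc ∫⁻ ω in {ω | Y ω = 0}ᶜ, ∏ i, u i ^ Y ω i ∂μ
          ≤ ∫⁻ ω in {ω | Y ω = 0}ᶜ, (∏ i, v i ^ Y ω i) ^ θ ∂μ :=
          lintegral_mono fun ω => prod_pow_le_rpow hθ0.le huv (Y ω)
      _ ≤ _ := setLIntegral_rpow_le μ (measurable_prod_pow hY v).aemeasurable _ hθ0 hθ1

lemma tendsto_measure_ne_zero {Y : ℕ → Ω → ι → ℕ} [IsFiniteMeasure μ]
    (hY : ∀ n, Measurable (Y n)) (hext : ∀ᵐ ω ∂μ, ∀ᶠ n in atTop, Y n ω = 0) :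
    Tendsto (fun n => μ {ω | Y n ω ≠ 0}) atTop (nhds 0) := by
  have h := tendsto_measure_of_ae_tendsto_indicator_of_isFiniteMeasure
    (As := fun n => {ω | Y n ω ≠ 0}) atTop MeasurableSet.empty
    (fun n => (hY n (measurableSet_singleton 0)).compl)
    (hext.mono fun ω hω => hω.mono fun n hn => by simp [hn])
  rwa [measure_empty] at h

lemma tendsto_lintegral_prod_pow_one [IsProbabilityMeasure μ] {Y : ℕ → Ω → ι → ℕ}
    (hY : ∀ n, Measurable (Y n)) (hext : ∀ᵐ ω ∂μ, ∀ᶠ n in atTop, Y n ω = 0)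
    {u v : ι → ℝ≥0∞} (hu : ∀ i, 1 ≤ u i) {θ : ℝ} (hθ0 : 0 < θ) (hθ1 : θ < 1)
    (huv : ∀ i, u i ≤ v i ^ θ) {B : ℝ≥0∞} (hB : B ≠ ⊤)
    (hbound : ∀ᶠ n in atTop, ∫⁻ ω, ∏ i, v i ^ Y n ω i ∂μ ≤ B) :
    Tendsto (fun n => ∫⁻ ω, ∏ i, u i ^ Y n ω i ∂μ) atTop (nhds 1) := by
  have hupper : Tendsto (fun n => 1 + B ^ θ * μ {ω | Y n ω ≠ 0} ^ (1 - θ)) atTop (nhds 1) := by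
    have h := ((ENNReal.continuous_rpow_const (y := 1 - θ)).tendsto 0).comp
      (tendsto_measure_ne_zero hY hext)
    rw [ENNReal.zero_rpow_of_pos (sub_pos.2 hθ1)] at h
    simpa using (ENNReal.Tendsto.const_mul h (Or.inr (ENNReal.rpow_ne_top_of_nonneg hθ0.le hB)))
      |>.const_add 1
  refine tendsto_of_tendsto_of_tendsto_of_le_of_le' tendsto_const_nhds hupper
    (Eventually.of_forall fun n => one_le_lintegral_prod_pow hu) ?_
  filter_upwards [hbound] with n hn
  exact (lintegral_prod_pow_le_one_add (hY n) hθ0 hθ1 huv).trans (by gcongr)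

end ProdPow

lemma ae_eventually_eq_zero_of_extinction {d : ℕ} {Ω : Type*} [MeasurableSpace Ω]
    {μ : Measure Ω} [IsProbabilityMeasure μ] {X : ℕ → Ω → Fin d → ℕ}
    (hX : ∀ n, Measurable (X n)) (hext : μ (ExtinctionEvent X) = 1) :
    ∀ᵐ ω ∂μ, ∀ᶠ n in atTop, X n ω = 0 := by
  have hE : MeasurableSet (ExtinctionEvent X) := by
    have : ExtinctionEvent X = ⋃ N, ⋂ n ≥ N, X n ⁻¹' {0} := by
      ext ω; simp [ExtinctionEvent]
    rw [this]
    exact .iUnion fun N => .iInter fun n => .iInter fun _ => hX n (measurableSet_singleton 0)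
  have h : ∀ᵐ ω ∂μ, ω ∈ ExtinctionEvent X := (mem_ae_iff_prob_eq_one hE).2 hext
  exact h.mono fun ω hω => eventually_atTop.2 hω

section BranchingProcess

variable {d : ℕ} {Ω : Type*} [MeasurableSpace Ω] {P : Fin d → Measure Ω}
  {X : ℕ → Ω → Fin d → ℕ}

lemma genFun_add (hiter : ∀ n q, (genFun P X 1)^[n] q = genFun P X n q) (a b : ℕ)
    (q : Fin d → ℝ≥0∞) : genFun P X (a + b) q = genFun P X a (genFun P X b q) := by
  rw [← hiter, ← hiter, ← hiter, Function.iterate_add_apply]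

lemma one_le_genFun [∀ k, IsProbabilityMeasure (P k)] {q : Fin d → ℝ≥0∞} (hq : ∀ j, 1 ≤ q j)
    (n : ℕ) (k : Fin d) : 1 ≤ genFun P X n q k :=
  one_le_lintegral_prod_pow hq

lemma logGenFun_one_iterate [∀ k, IsProbabilityMeasure (P k)]
    (hiter : ∀ n q, (genFun P X 1)^[n] q = genFun P X n q) (n : ℕ) (l : Fin d → ℝ≥0∞) :
    (logGenFun P X 1)^[n] l = logGenFun P X n l := by
  induction n with
  | zero => ext k; simp [logGenFun, ← hiter 0, elog_eexp]
  | succ n ih =>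
    have hcancel : (fun j => eexp (logGenFun P X n l j)) = genFun P X n (fun j => eexp (l j)) :=
      funext fun j => eexp_elog (one_le_genFun (fun i => one_le_eexp (l i)) n j)
    rw [Function.iterate_succ_apply', ih]
    change (fun k => elog (genFun P X 1 (fun j => eexp (logGenFun P X n l j)) k))
      = fun k => elog (genFun P X (n + 1) (fun j => eexp (l j)) k)
    rw [hcancel, add_comm, genFun_add hiter]

lemma exists_genFun_le_of_limsup_ne_top [∀ k, IsProbabilityMeasure (P k)] {l : Fin d → ℝ≥0∞}
    (hlim : limsup (fun n => ∑ k, logGenFun P X n l k) atTop ≠ ⊤) :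
    ∃ B ≠ ⊤, ∀ᶠ n in atTop, ∀ k, genFun P X n (fun j => eexp (l j)) k ≤ B := by
  refine ⟨eexp (limsup (fun n => ∑ k, logGenFun P X n l k) atTop + 1),
    eexp_ne_top (add_ne_top.2 ⟨hlim, one_ne_top⟩), ?_⟩
  filter_upwards [eventually_lt_of_limsup_lt (ENNReal.lt_add_right hlim one_ne_zero)]
    with n hn k
  rw [← eexp_elog (one_le_genFun (fun i => one_le_eexp (l i)) n k)]
  exact strictMono_eexp.monotone
    ((Finset.single_le_sum (fun _ _ => zero_le) (Finset.mem_univ k)).trans hn.le)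

lemma genFun_ne_top_of_eventually_le [∀ k, IsProbabilityMeasure (P k)]
    (hX : ∀ n, Measurable (X n)) (hiter : ∀ n q, (genFun P X 1)^[n] q = genFun P X n q)
    {N : ℕ} (hN : ∀ k j, 0 < P k {ω | 1 ≤ X N ω j}) {r : Fin d → ℝ≥0∞} (hr1 : ∀ j, 1 ≤ r j)
    (hr : ∀ j, r j ≠ ⊤) {B : ℝ≥0∞} (hB : B ≠ ⊤)
    (hbound : ∀ᶠ n in atTop, ∀ k, genFun P X n r k ≤ B) (j : Fin d) :
    genFun P X N r j ≠ ⊤ := by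
  intro hj
  rcases N.eq_zero_or_pos with rfl | hNpos
  · exact hr j (by simpa [← hiter 0] using hj)
  -- an infinite coordinate spreads to every coordinate after `N` more generations
  have htop : ∀ t, genFun P X ((t + 1) * N) r j = ⊤ := by
    intro t
    induction t with
    | zero => simpa using hj
    | succ t ih =>
      rw [show (t + 1 + 1) * N = N + (t + 1) * N by ring, genFun_add hiter]
      exact lintegral_prod_pow_eq_top (hX N) (one_le_genFun hr1 _) ih (hN j j)
  obtain ⟨M, hM⟩ := eventually_atTop.1 hbound
  have hle := hM ((M + 1) * N) (by nlinarith) j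
  rw [htop M, top_le_iff] at hle
  exact hB hle

theorem tendsto_logGenFun_zero_of_lt [∀ k, IsProbabilityMeasure (P k)]
    (hX : ∀ n, Measurable (X n)) (hiter : ∀ n q, (genFun P X 1)^[n] q = genFun P X n q)
    (hPR : PositiveRegular P X) (hext : ∀ k, P k (ExtinctionEvent X) = 1)
    {l η : Fin d → ℝ≥0∞} (hl : ∀ j, l j ≠ ⊤)
    (hlim : limsup (fun n => ∑ k, logGenFun P X n l k) atTop ≠ ⊤) (hlt : η < l) (k : Fin d) :
    Tendsto (fun n => logGenFun P X n η k) atTop (nhds 0) := by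
  obtain ⟨N, hN⟩ := hPR
  obtain ⟨hle, j, hj⟩ := Pi.lt_def.1 hlt
  set q : Fin d → ℝ≥0∞ := fun i => eexp (η i)
  set r : Fin d → ℝ≥0∞ := fun i => eexp (l i)
  have hr1 : ∀ i, 1 ≤ r i := fun i => one_le_eexp _
  obtain ⟨B, hB, hbound⟩ := exists_genFun_le_of_limsup_ne_top hlim
  have hv : ∀ i, genFun P X N r i ≠ ⊤ :=
    genFun_ne_top_of_eventually_le hX hiter hN hr1 (fun i => eexp_ne_top (hl i)) hB hbound
  have huv : ∀ i, genFun P X N q i < genFun P X N r i := fun i =>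
    lintegral_prod_pow_lt (hX N) hr1 (fun i => strictMono_eexp.monotone (hle i))
      (strictMono_eexp hj) (eexp_ne_top (hl j)) (hN i j) (hv i)
  obtain ⟨θ, hθ0, hθ1, hθ⟩ := exists_rpow_gt huv hv
  have hone : Tendsto (fun n => genFun P X n q k) atTop (nhds 1) := by
    rw [← tendsto_add_atTop_iff_nat N]
    simp only [genFun_add hiter _ N]
    refine tendsto_lintegral_prod_pow_one hX (ae_eventually_eq_zero_of_extinction hX (hext k))
      (one_le_genFun (fun i => one_le_eexp _) N) hθ0 hθ1 (fun i => (hθ i).le) hB ?_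
    filter_upwards [(tendsto_add_atTop_nat N).eventually hbound] with n hn
    rw [genFun_add hiter] at hn
    exact hn k
  exact tendsto_elog_one.comp hone

end BranchingProcess

theorem logGenFun_unstable_general
    {d : ℕ} {Ω : Type*} [MeasurableSpace Ω]
    (P : Fin d → Measure Ω) (X : ℕ → Ω → Fin d → ℕ)
    (hprob : ∀ k, IsProbabilityMeasure (P k))
    (hmeas : ∀ n, Measurable (X n))
    (hiter : ∀ n q, (genFun P X 1)^[n] q = genFun P X n q)
    (hPR : PositiveRegular P X)
    (hext : ∀ k, P k (ExtinctionEvent X) = 1) :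
    (∀ l η : Fin d → ℝ≥0∞, (∀ j, l j ≠ ⊤) → l ≠ 0 →
        limsup (fun n => ∑ k, (logGenFun P X 1)^[n] l k) atTop ≠ ⊤ →
        (∀ j, η j ≠ ⊤) → η < l →
        Tendsto (fun n => (logGenFun P X 1)^[n] η) atTop (nhds 0)) ∧
      (∀ l η : Fin d → ℝ≥0∞, (∀ j, l j ≠ ⊤) → l ≠ 0 →
        0 < limsup (fun n => ∑ k, (logGenFun P X 1)^[n] l k) atTop →
        (∀ j, η j ≠ ⊤) → l < η →
        limsup (fun n => ∑ k, (logGenFun P X 1)^[n] η k) atTop = ⊤) := by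
  have := hprob
  simp only [logGenFun_one_iterate hiter]
  refine ⟨fun l η hl _ hlim _ hlt => tendsto_pi_nhds.2
    (tendsto_logGenFun_zero_of_lt hmeas hiter hPR hext hl hlim hlt), ?_⟩
  intro l η _ _ hpos hη hlt
  by_contra hlim
  have hsum : Tendsto (fun n => ∑ k, logGenFun P X n l k) atTop (nhds 0) := by
    simpa using tendsto_finsetSum Finset.univ fun k _ =>
      tendsto_logGenFun_zero_of_lt hmeas hiter hPR hext hη hlim hlt k
  exact hpos.ne' hsum.limsup_eq

/-- (Instability.) For a subcritical, positive regular, non-singular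
`d`-type branching process with continuous generating function and a.s. extinction:
(i) if `λ ∈ [0,∞)^d \ {0}` with `limsup_n |g⁽ⁿ⁾(λ)| < ∞` and `η ∈ [0,∞)^d` with
`η < λ` (componentwise `≤`, at least one strict), then `lim_n |g⁽ⁿ⁾(η)| = 0`;
(ii) if `limsup_n |g⁽ⁿ⁾(λ)| > 0` and `η > λ`, then `limsup_n |g⁽ⁿ⁾(η)| = ∞`. -/
theorem logGenFun_unstable
    {d : ℕ} {Ω : Type*} [MeasurableSpace Ω]
    (P : Fin d → Measure Ω) (X : ℕ → Ω → Fin d → ℕ)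
    (hprob : ∀ k, IsProbabilityMeasure (P k))
    (hmeas : ∀ n, Measurable (X n))
    (hiter : ∀ n q, (genFun P X 1)^[n] q = genFun P X n q)
    (hsub : Subcritical P X)
    (hPR : PositiveRegular P X)
    (hNS : NonSingular P X)
    (hcont : GenFunContinuous P X)
    (hext : ∀ k, P k (ExtinctionEvent X) = 1) :
    (∀ l η : Fin d → ℝ≥0∞, (∀ j, l j ≠ ⊤) → l ≠ 0 →
        limsup (fun n => ∑ k, (logGenFun P X 1)^[n] l k) atTop ≠ ⊤ →
        (∀ j, η j ≠ ⊤) → η < l →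
        Tendsto (fun n => (logGenFun P X 1)^[n] η) atTop (nhds 0)) ∧
      (∀ l η : Fin d → ℝ≥0∞, (∀ j, l j ≠ ⊤) → l ≠ 0 →
        0 < limsup (fun n => ∑ k, (logGenFun P X 1)^[n] l k) atTop →
        (∀ j, η j ≠ ⊤) → l < η →
        limsup (fun n => ∑ k, (logGenFun P X 1)^[n] η k) atTop = ⊤) :=
  logGenFun_unstable_general P X hprob hmeas hiter hPR hext
end
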